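/- arXiv:2303.07156 — 7 statements merged into one kernel-verified Lean document; each statement's English description precedes it below -/
import Mathlib

section
/- Suppose a quaternary additive code with parameters (n, k, d)_4 exists (an additive subgroup of F_4^n of size 4^k with minimum Hamming distance d, where 2k is a positive integer). Then 3n ≥ Σ_{i=0}^{2k-1} ⌈d / 2^{i-1}⌉. Equivalently, 3n ≥ 2d + Σ_{i=1}^{2k-1} ⌈d / 2^{i-1}⌉. -/
/-!
Identify `F` with `(ZMod 2)²` and encode each symbol `(u, v)` as `(u, u + v, v)`, a word of the
binary `[3, 2, 2]` code: every nonzero symbol becomes a word of weight exactly `2`, so `C` becomes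
a binary linear code of length `3n`, dimension `K` and minimum distance at least `2d`, to which the
binary Griesmer bound `∑_{i<K} ⌈D / 2^i⌉ ≤ N` applies; finally `⌈2d / 2^(i+1)⌉ = ⌈d / 2^i⌉`.

The Griesmer bound itself is the residual-code argument. Restrict the code to the zero set of a
minimum-weight word `c`. Over `ZMod 2`, `wt x + wt (x + c) = 2 wt (x restricted) + wt c`, and both
terms on the left are at least `wt c` unless `x ∈ {0, c}`; so the restriction has kernel `{0, c}`
and the residual code has length `N - wt c`, dimension `K - 1` and minimum distance
`≥ ⌈wt c / 2⌉`.
-/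

open Finset Module

theorem Nat.ceilDiv_ceilDiv {a b c : ℕ} (ha : 0 < a) (hc : 0 < c) :
    b ⌈/⌉ a ⌈/⌉ c = b ⌈/⌉ (a * c) :=
  eq_of_forall_ge_iff fun x => by
    rw [ceilDiv_le_iff_le_mul hc, ceilDiv_le_iff_le_mul ha, ceilDiv_le_iff_le_mul (mul_pos ha hc),
      mul_assoc]

theorem sum_range_succ_two_mul_ceilDiv (d k : ℕ) :
    ∑ i ∈ range (k + 1), (2 * d) ⌈/⌉ 2 ^ i = 2 * d + ∑ i ∈ range k, d ⌈/⌉ 2 ^ i := by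
  rw [sum_range_succ', pow_zero, ceilDiv_one, add_comm]
  congr 1
  refine sum_congr rfl fun i _ => ?_
  rw [pow_succ', ← Nat.ceilDiv_ceilDiv two_pos (Nat.two_pow_pos i)]
  congr 1
  rw [Nat.ceilDiv_eq_add_pred_div]
  omega

theorem Module.finrank_eq_of_natCard_eq_pow {K V : Type*} [DivisionRing K] [Finite K]
    [AddCommGroup V] [Module K V] [Module.Finite K V] {k : ℕ} (h : Nat.card V = Nat.card K ^ k) :
    finrank K V = k :=
  Nat.pow_right_injective Finite.one_lt_card (natCard_eq_pow_finrank.symm.trans h)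

theorem hammingNorm_subtype {ι β : Type*} [Fintype ι] [Zero β] [DecidableEq β] (p : ι → Prop)
    [DecidablePred p] (x : ι → β) :
    hammingNorm (fun j : {i // p i} => x j) = #{i | p i ∧ x i ≠ 0} := by
  simp only [hammingNorm]
  rw [← Fintype.card_subtype, ← Fintype.card_subtype]
  exact Fintype.card_congr (Equiv.subtypeSubtypeEquivSubtypeInter p (fun i => x i ≠ 0))

theorem hammingNorm_uncurry {ι κ β : Type*} [Fintype ι] [Fintype κ] [Zero β] [DecidableEq β]
    (x : ι → κ → β) : hammingNorm (Function.uncurry x) = ∑ i, hammingNorm (x i) := by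
  simp only [hammingNorm, card_filter, Fintype.sum_prod_type]
  rfl

theorem hammingNorm_uncurry_comp {ι κ M β : Type*} [Fintype ι] [Fintype κ] [Zero M]
    [DecidableEq M] [Zero β] [DecidableEq β] {f : M → κ → β} {m : ℕ} (hf0 : f 0 = 0)
    (hf : ∀ a ≠ 0, hammingNorm (f a) = m) (x : ι → M) :
    hammingNorm (Function.uncurry (f ∘ x)) = m * hammingNorm x := by
  rw [hammingNorm_uncurry, hammingNorm, card_filter, mul_sum]
  refine sum_congr rfl fun i _ => ?_
  by_cases h : x i = 0 <;> simp [h, hf0, hf]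

theorem hammingNorm_add_hammingNorm_add {ι : Type*} [Fintype ι] (x c : ι → ZMod 2) :
    hammingNorm x + hammingNorm (x + c) = 2 * #{i | c i = 0 ∧ x i ≠ 0} + hammingNorm c := by
  simp only [hammingNorm, card_filter, mul_sum, ← sum_add_distrib]
  refine sum_congr rfl fun i _ => ?_
  rw [Pi.add_apply]
  generalize x i = a; generalize c i = b
  fin_cases a <;> fin_cases b <;> rfl

section Residual

variable {ι : Type*}

def restrictZeros (c : ι → ZMod 2) : (ι → ZMod 2) →ₗ[ZMod 2] ({i // c i = 0} → ZMod 2) :=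
  LinearMap.funLeft (ZMod 2) (ZMod 2) Subtype.val

theorem restrictZeros_self (c : ι → ZMod 2) : restrictZeros c c = 0 :=
  funext fun j => j.2

variable [Fintype ι]

theorem hammingNorm_restrictZeros (c x : ι → ZMod 2) :
    hammingNorm (restrictZeros c x) = #{i | c i = 0 ∧ x i ≠ 0} :=
  hammingNorm_subtype _ x

theorem card_zeros_add_hammingNorm (c : ι → ZMod 2) :
    Fintype.card {i // c i = 0} + hammingNorm c = Fintype.card ι := by
  rw [hammingNorm, Fintype.card_subtype, card_filter_add_card_filter_not, card_univ]

variable {C : Submodule (ZMod 2) (ι → ZMod 2)} {c : ι → ZMod 2} (hc : c ∈ C)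
  (hmin : ∀ x ∈ C, x ≠ 0 → hammingNorm c ≤ hammingNorm x)
include hc hmin

theorem hammingNorm_le_two_mul_hammingNorm_restrictZeros {x : ι → ZMod 2} (hx : x ∈ C)
    (hx0 : x ≠ 0) (hxc : x ≠ c) : hammingNorm c ≤ 2 * hammingNorm (restrictZeros c x) := by
  have hxc0 : x + c ≠ 0 := fun h => hxc (funext fun i => CharTwo.add_eq_zero.mp (congrFun h i))
  have hsum := hammingNorm_add_hammingNorm_add x c
  have hx_ge := hmin x hx hx0
  have hxc_ge := hmin (x + c) (C.add_mem hx hc) hxc0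
  rw [hammingNorm_restrictZeros]
  omega

theorem le_two_mul_hammingNorm_of_mem_map_restrictZeros {y} (hy : y ∈ C.map (restrictZeros c))
    (hy0 : y ≠ 0) : hammingNorm c ≤ 2 * hammingNorm y := by
  obtain ⟨x, hx, rfl⟩ := hy
  refine hammingNorm_le_two_mul_hammingNorm_restrictZeros hc hmin hx ?_ ?_
  · rintro rfl; exact hy0 (map_zero _)
  · intro hxc; exact hy0 (by rw [hxc, restrictZeros_self])

theorem ker_domRestrict_restrictZeros (hc0 : c ≠ 0) :
    LinearMap.ker ((restrictZeros c).domRestrict C) = ZMod 2 ∙ ⟨c, hc⟩ := by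
  refine le_antisymm ?_ ((Submodule.span_singleton_le_iff_mem _ _).2 (restrictZeros_self c))
  rintro ⟨x, hx⟩ hker
  rw [Submodule.mem_span_singleton]
  by_cases hx0 : x = 0
  · exact ⟨0, Subtype.ext (by simp [hx0])⟩
  by_cases hxc : x = c
  · exact ⟨1, Subtype.ext (by simp [hxc])⟩
  have hle := hammingNorm_le_two_mul_hammingNorm_restrictZeros hc hmin hx hx0 hxc
  rw [show restrictZeros c x = 0 from LinearMap.mem_ker.mp hker, hammingNorm_zero] at hle
  exact absurd (hammingNorm_pos_iff.2 hc0) (by omega)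

theorem finrank_map_restrictZeros_add_one (hc0 : c ≠ 0) :
    finrank (ZMod 2) (C.map (restrictZeros c)) + 1 = finrank (ZMod 2) C := by
  have hrank := LinearMap.finrank_range_add_finrank_ker ((restrictZeros c).domRestrict C)
  rwa [LinearMap.range_domRestrict, ker_domRestrict_restrictZeros hc hmin hc0,
    finrank_span_singleton (by simpa using hc0)] at hrank

end Residual

theorem exists_min_hammingNorm_of_ne_bot {ι : Type*} [Fintype ι]
    {C : Submodule (ZMod 2) (ι → ZMod 2)} (hC : C ≠ ⊥) :
    ∃ c ∈ C, c ≠ 0 ∧ ∀ x ∈ C, x ≠ 0 → hammingNorm c ≤ hammingNorm x := by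
  obtain ⟨x, hx, hx0⟩ := Submodule.exists_mem_ne_zero_of_ne_bot hC
  obtain ⟨c, ⟨hc, hc0⟩, hmin⟩ :=
    Set.exists_min_image {x | x ∈ C ∧ x ≠ 0} hammingNorm (Set.toFinite _) ⟨x, hx, hx0⟩
  exact ⟨c, hc, hc0, fun x hx hx0 => hmin x ⟨hx, hx0⟩⟩

theorem griesmer_bound {ι : Type*} [Fintype ι] (C : Submodule (ZMod 2) (ι → ZMod 2)) {D : ℕ}
    (hD : ∀ x ∈ C, x ≠ 0 → D ≤ hammingNorm x) :
    ∑ i ∈ range (finrank (ZMod 2) C), D ⌈/⌉ 2 ^ i ≤ Fintype.card ι := by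
  induction hk : finrank (ZMod 2) C generalizing ι C D with
  | zero => simp
  | succ k ih =>
    obtain ⟨c, hc, hc0, hmin⟩ := exists_min_hammingNorm_of_ne_bot (C := C)
      (by rintro rfl; simp at hk)
    have hDc : D ≤ hammingNorm c := hD c hc hc0
    have hres := ih (C.map (restrictZeros c)) (D := D ⌈/⌉ 2)
      (fun y hy hy0 => (ceilDiv_le_iff_le_mul two_pos).2 <| hDc.trans <|
        le_two_mul_hammingNorm_of_mem_map_restrictZeros hc hmin hy hy0)
      (by have := finrank_map_restrictZeros_add_one hc hmin hc0; omega)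
    have hcard := card_zeros_add_hammingNorm c
    simp only [Nat.ceilDiv_ceilDiv two_pos (Nat.two_pow_pos _), ← pow_succ'] at hres
    rw [sum_range_succ', pow_zero, ceilDiv_one]
    omega

namespace Module.Basis

variable {F : Type*} [AddCommGroup F] [Module (ZMod 2) F] (b : Basis (Fin 2) (ZMod 2) F)

noncomputable def parityEncode : F →ₗ[ZMod 2] (Fin 3 → ZMod 2) :=
  LinearMap.pi ![b.coord 0, b.coord 0 + b.coord 1, b.coord 1]

theorem hammingNorm_parityEncode {a : F} (ha : a ≠ 0) : hammingNorm (b.parityEncode a) = 2 := by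
  have hcoord : ¬(b.coord 0 a = 0 ∧ b.coord 1 a = 0) := fun ⟨h0, h1⟩ =>
    ha <| b.repr.map_eq_zero_iff.1 <| by ext i; fin_cases i; exacts [h0, h1]
  have hencode : b.parityEncode a = ![b.coord 0 a, b.coord 0 a + b.coord 1 a, b.coord 1 a] := by
    ext j; fin_cases j <;> rfl
  rw [hencode]
  generalize b.coord 0 a = u, b.coord 1 a = v at hcoord
  revert u v
  decide

end Module.Basis

theorem additive_griesmer_bound_general {F : Type*} [Field F] [Fintype F] [DecidableEq F]
    [Algebra (ZMod 2) F] (hF : Fintype.card F = 4)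
    {n K d : ℕ} (hK : 1 ≤ K)
    (C : Submodule (ZMod 2) (Fin n → F)) (hcard : Nat.card C = 2 ^ K)
    (hmin : ∀ c ∈ C, c ≠ 0 → d ≤ hammingNorm c) :
    2 * d + ∑ j ∈ Finset.range (K - 1), (d + 2 ^ j - 1) / 2 ^ j ≤ 3 * n := by
  have hF2 : finrank (ZMod 2) F = 2 :=
    finrank_eq_of_natCard_eq_pow (by rw [Nat.card_eq_fintype_card, hF, Nat.card_zmod]; rfl)
  have hCK : finrank (ZMod 2) C = K := finrank_eq_of_natCard_eq_pow (by rwa [Nat.card_zmod])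
  let b : Basis (Fin 2) (ZMod 2) F := (finBasis (ZMod 2) F).reindex (finCongr hF2)
  let Φ := (LinearEquiv.curry (ZMod 2) (ZMod 2) (Fin n) (Fin 3)).symm.toLinearMap ∘ₗ
    b.parityEncode.compLeft (Fin n)
  have hΦ (x : Fin n → F) : hammingNorm (Φ x) = 2 * hammingNorm x :=
    hammingNorm_uncurry_comp (map_zero _) (fun _ => b.hammingNorm_parityEncode) x
  have hΦinj : Function.Injective Φ := (injective_iff_map_eq_zero Φ).2 fun x hx =>
    hammingNorm_eq_zero.1 (by simpa [hx] using hΦ x)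
  have hG := griesmer_bound (C.map Φ) (D := 2 * d) <| by
    rintro _ ⟨x, hx, rfl⟩ hx0
    rw [hΦ]
    exact Nat.mul_le_mul_left 2 (hmin x hx (by rintro rfl; exact hx0 (map_zero Φ)))
  rw [← (Submodule.equivMapOfInjective Φ hΦinj C).finrank_eq, hCK, Fintype.card_prod,
    Fintype.card_fin, Fintype.card_fin] at hG
  obtain ⟨K, rfl⟩ := Nat.exists_eq_add_of_le' hK
  rw [Nat.add_sub_cancel, mul_comm 3]
  exact (sum_range_succ_two_mul_ceilDiv d K).symm.trans_le hG

/-- Lemma 4 (Griesmer-type bound for quaternary additive codes):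
if an additive (n, K/2, d)_4 code exists (an F_2-subspace of F_4^n of size 2^K,
K ≥ 1, minimum Hamming distance d), then
3n ≥ 2d + ∑_{j=0}^{K-2} ⌈d/2^j⌉  (= ∑_{i=0}^{K-1} ⌈d/2^{i-1}⌉). -/
theorem additive_griesmer_bound {F : Type*} [Field F] [Fintype F] [DecidableEq F]
    [Algebra (ZMod 2) F] (hF : Fintype.card F = 4)
    {n K d : ℕ} (hK : 1 ≤ K)
    (C : Submodule (ZMod 2) (Fin n → F)) (hcard : Nat.card C = 2 ^ K)
    (hmin : ∀ c ∈ C, c ≠ 0 → d ≤ hammingNorm c)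
    (hex : ∃ c ∈ C, c ≠ 0 ∧ hammingNorm c = d) :
    2 * d + ∑ j ∈ Finset.range (K - 1), (d + 2 ^ j - 1) / 2 ^ j ≤ 3 * n :=
  additive_griesmer_bound_general hF hK C hcard hmin
end

section
/- Let C be the 1-generator quasi-cyclic code of length 2n and index 2 over F_q generated by ([g(x)f_0(x)], [g(x)f_1(x)]), where g(x) divides x^n − 1 and the cyclic code ⟨g(x)⟩ has minimum distance d. Suppose gcd(f_0(x) + α f_1(x), (x^n − 1)/g(x)) = 1 for all α in F_q (including α = 0, i.e. gcd(f_0, (x^n−1)/g) = 1, and gcd(f_1, (x^n−1)/g) = 1), and deg(f_0 f_1) ≥ 1. Then every nonzero codeword ([a(x)g(x)f_0(x)], [a(x)g(x)f_1(x)]) has symplectic weight at least ⌈(q+1)d/q⌉. -/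
open Polynomial Finset

/-! Every coordinate where `(u | v)` is nonzero contributes exactly `q` to the left-hand side of
the identity `q · w_s(u | v) = w_H(v) + ∑_{α ∈ F} w_H(u + α v)`: if `v i ≠ 0` then
`u i + α v i` vanishes for exactly one `α`. For a codeword `(a g f₀, a g f₁)` every vector on the
right is the coefficient vector of a nonzero codeword of `⟨g⟩`, because `f₁` and all `f₀ + α f₁`
are units modulo `(xⁿ - 1)/g`; so each has weight at least `d`, and `(q + 1) d ≤ q · w_s`. -/

section SymplecticWeight

variable {F : Type*} [Field F] [Fintype F] [DecidableEq F]

theorem card_filter_add_mul_ne_zero {x y : F} (hy : y ≠ 0) :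
    #{α : F | x + α * y ≠ 0} = Fintype.card F - 1 := by
  have : ({α : F | x + α * y ≠ 0} : Finset F) = univ.erase (-x / y) := by
    ext α
    simp [eq_div_iff hy, add_eq_zero_iff_eq_neg']
  rw [this, card_erase_of_mem (mem_univ _), card_univ]

theorem ite_add_card_filter_add_mul_ne_zero (x y : F) :
    (if y ≠ 0 then 1 else 0) + #{α : F | x + α * y ≠ 0} =
      if x ≠ 0 ∨ y ≠ 0 then Fintype.card F else 0 := by
  by_cases hy : y = 0
  · by_cases hx : x = 0 <;> simp [hx, hy, filter_true_of_mem]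
  · have : 0 < Fintype.card F := Fintype.card_pos
    rw [card_filter_add_mul_ne_zero hy, if_pos hy, if_pos (Or.inr hy)]
    omega

variable {ι : Type*} [Fintype ι]

def symplecticWeight (u v : ι → F) : ℕ := #{i | u i ≠ 0 ∨ v i ≠ 0}

theorem hammingNorm_add_sum_hammingNorm_add_smul (u v : ι → F) :
    hammingNorm v + ∑ α : F, hammingNorm (u + α • v) = Fintype.card F * symplecticWeight u v := by
  simp only [hammingNorm, symplecticWeight, card_filter, Pi.add_apply, Pi.smul_apply,
    smul_eq_mul, mul_sum]
  rw [sum_comm, ← sum_add_distrib]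
  refine sum_congr rfl fun i _ => ?_
  rw [← card_filter, ite_add_card_filter_add_mul_ne_zero, mul_ite, mul_one, mul_zero]

theorem le_symplecticWeight_of_le_hammingNorm {u v : ι → F} {d : ℕ} (hv : d ≤ hammingNorm v)
    (huv : ∀ α : F, d ≤ hammingNorm (u + α • v)) :
    ((Fintype.card F + 1) * d + Fintype.card F - 1) / Fintype.card F ≤ symplecticWeight u v := by
  have hq : 0 < Fintype.card F := Fintype.card_pos
  have hsum : (Fintype.card F + 1) * d ≤ Fintype.card F * symplecticWeight u v := by
    rw [← hammingNorm_add_sum_hammingNorm_add_smul, add_mul, one_mul, add_comm]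
    gcongr
    have := sum_le_sum fun α (_ : α ∈ univ) => huv α
    rwa [sum_const, Finset.card_univ, smul_eq_mul] at this
  rw [Nat.div_le_iff_le_mul_add_pred hq]
  omega

end SymplecticWeight

theorem dvd_mul_of_dvd_mul_mul_of_isCoprime {R : Type*} [EuclideanDomain R] {a b g m : R}
    (hg : g ∣ m) (hb : IsCoprime b (m / g)) (h : m ∣ a * b * g) : m ∣ a * g := by
  obtain ⟨k, rfl⟩ := hg
  rcases eq_or_ne g 0 with rfl | hg0
  · simp
  rw [mul_div_cancel_left₀ _ hg0] at hb
  rw [mul_comm g k, mul_dvd_mul_iff_right hg0] at h ⊢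
  exact hb.symm.dvd_of_dvd_mul_right h

section CoeffVec

variable {R : Type*} [Semiring R]

/-- The paper's `[p]`; coefficients of degree `≥ n` are dropped. -/
def coeffVec (n : ℕ) (p : R[X]) : Fin n → R := fun i => p.coeff i

theorem coeffVec_add_C_mul (n : ℕ) (p r : R[X]) (α : R) :
    coeffVec n (p + C α * r) = coeffVec n p + α • coeffVec n r := by
  ext i
  simp [coeffVec]

end CoeffVec

theorem Polynomial.C_mul_mod {K : Type*} [Field K] (c : K) (p q : K[X]) :
    C c * p % q = C c * (p % q) := by
  simp only [mod_def, ← smul_eq_C_mul, smul_modByMonic]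

theorem one_generator_qc_symplectic_bound_general {F : Type*} [Field F] [Fintype F] [DecidableEq F]
    {n : ℕ} (g f₀ f₁ : F[X]) (hg : g ∣ X ^ n - 1) (d : ℕ)
    (hmin : ∀ a : F[X], (a * g) % (X ^ n - 1) ≠ 0 →
      d ≤ hammingNorm fun i : Fin n => ((a * g) % (X ^ n - 1)).coeff i)
    (hcop : ∀ α : F, IsCoprime (f₀ + C α * f₁) ((X ^ n - 1) / g))
    (hcop1 : IsCoprime f₁ ((X ^ n - 1) / g)) :
    ∀ a : F[X],
      ((a * g * f₀) % (X ^ n - 1), (a * g * f₁) % (X ^ n - 1)) ≠ (0, 0) →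
      ((Fintype.card F + 1) * d + Fintype.card F - 1) / Fintype.card F ≤
        (univ.filter fun i : Fin n =>
          ((a * g * f₀) % (X ^ n - 1)).coeff i ≠ 0 ∨
          ((a * g * f₁) % (X ^ n - 1)).coeff i ≠ 0).card := by
  intro a hne
  set m : F[X] := X ^ n - 1
  have hag : a * g % m ≠ 0 := by
    rw [Ne, EuclideanDomain.mod_eq_zero]
    intro hdvd
    simp [EuclideanDomain.mod_eq_zero.mpr (hdvd.mul_right _)] at hne
  have hweight (b : F[X]) (hb : IsCoprime b (m / g)) :
      d ≤ hammingNorm (coeffVec n (a * b * g % m)) :=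
    hmin (a * b) fun h => hag <| EuclideanDomain.mod_eq_zero.mpr <|
      dvd_mul_of_dvd_mul_mul_of_isCoprime hg hb (EuclideanDomain.mod_eq_zero.mp h)
  have hv := hweight f₁ hcop1
  rw [mul_right_comm] at hv
  refine le_symplecticWeight_of_le_hammingNorm hv fun α => ?_
  have := hweight _ (hcop α)
  rwa [mul_right_comm, mul_add, mul_left_comm, add_mod, C_mul_mod, coeffVec_add_C_mul] at this

/-- Theorem 1 (index 2 case): for the 1-generator quasi-cyclic code generated by
([g f₀], [g f₁]) with ⟨g⟩ of minimum distance d, gcd(f₀ + α f₁, (x^n−1)/g) = 1 for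
all α ∈ F_q, gcd(f₁, (x^n−1)/g) = 1 and deg(f₀ f₁) ≥ 1, every nonzero codeword
([a g f₀], [a g f₁]) has symplectic weight at least ⌈(q+1)d/q⌉. -/
theorem one_generator_qc_symplectic_bound {F : Type*} [Field F] [Fintype F] [DecidableEq F]
    {n : ℕ} (hn : 0 < n) (g f₀ f₁ : F[X]) (hg : g ∣ X ^ n - 1) (d : ℕ)
    (hmin : ∀ a : F[X], (a * g) % (X ^ n - 1) ≠ 0 →
      d ≤ hammingNorm fun i : Fin n => ((a * g) % (X ^ n - 1)).coeff i)
    (hcop : ∀ α : F, IsCoprime (f₀ + C α * f₁) ((X ^ n - 1) / g))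
    (hcop1 : IsCoprime f₁ ((X ^ n - 1) / g))
    (hdeg : 1 ≤ (f₀ * f₁).natDegree) :
    ∀ a : F[X],
      ((a * g * f₀) % (X ^ n - 1), (a * g * f₁) % (X ^ n - 1)) ≠ (0, 0) →
      ((Fintype.card F + 1) * d + Fintype.card F - 1) / Fintype.card F ≤
        (univ.filter fun i : Fin n =>
          ((a * g * f₀) % (X ^ n - 1)).coeff i ≠ 0 ∨
          ((a * g * f₁) % (X ^ n - 1)).coeff i ≠ 0).card :=
  one_generator_qc_symplectic_bound_general g f₀ f₁ hg d hmin hcop hcop1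
end

section
/- (Additive Construction X) Let C_2 ⊂ C_1 be additive codes over F_{q^2} of length n with F_q-dimensions 2k_2 < 2k_1 and minimum distances d_2 > d_1 respectively, and let C_3 be an additive code of length l, F_q-dimension 2(k_1 − k_2), and minimum distance δ. Write the generator matrix of C_1 as the stack of G_2 (generating C_2) and G_x. Then the additive code of length n + l generated by the rows of the block matrix [[G_x, G_3], [G_2, 0]] has F_q-dimension 2k_1 and minimum Hamming distance at least min{δ + d_1, d_2}. -/
/-!
A codeword of the new code is `(∑ aᵢ Gxᵢ + ∑ bⱼ G2ⱼ | ∑ aᵢ G3ᵢ)`. If all `aᵢ` vanish it is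
`(v | 0)` with `0 ≠ v ∈ C₂`, of weight at least `d₂`. Otherwise the right half is a nonzero word of
`C₃` because the rows of `G₃` are independent, and the left half is a nonzero word of `C₁` because
the rows of `G₁` are independent, so the weight is at least `δ + d₁`. The same coefficient
bookkeeping shows that the new rows are linearly independent.
-/

open Submodule Set

theorem hammingNorm_sum_elim {α β E : Type*} [Fintype α] [Fintype β] [Zero E] [DecidableEq E]
    (f : α → E) (g : β → E) :
    hammingNorm (Sum.elim f g) = hammingNorm f + hammingNorm g := by
  simp only [hammingNorm, Finset.card_filter, Fintype.sum_sum_type, Sum.elim_inl, Sum.elim_inr]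
  rfl

section ConstructionX

variable {K E ι κ α β : Type*} [Ring K] [AddCommGroup E] [Module K E] [Fintype ι] [Fintype κ]

def constructionXRows (Gx : ι → α → E) (G3 : ι → β → E) (G2 : κ → α → E) :
    ι ⊕ κ → α ⊕ β → E :=
  Sum.elim (fun i => Sum.elim (Gx i) (G3 i)) (fun j => Sum.elim (G2 j) 0)

variable {Gx : ι → α → E} {G3 : ι → β → E} {G2 : κ → α → E}

theorem sum_smul_constructionXRows (c : ι ⊕ κ → K) :
    ∑ i, c i • constructionXRows Gx G3 G2 i =
      Sum.elim (∑ i, c (.inl i) • Gx i + ∑ j, c (.inr j) • G2 j) (∑ i, c (.inl i) • G3 i) := by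
  ext (p | p) <;>
    simp [constructionXRows, Fintype.sum_sum_type, Finset.sum_apply]

theorem linearIndependent_constructionXRows (h2 : LinearIndependent K G2)
    (h3 : LinearIndependent K G3) : LinearIndependent K (constructionXRows Gx G3 G2) := by
  rw [Fintype.linearIndependent_iff]
  intro c hc
  rw [sum_smul_constructionXRows, ← Sum.elim_zero_zero, Sum.elim_eq_iff] at hc
  have hx : ∀ i, c (.inl i) = 0 := Fintype.linearIndependent_iff.mp h3 _ hc.2
  have hy : ∀ j, c (.inr j) = 0 :=
    Fintype.linearIndependent_iff.mp h2 _ (by simpa [hx] using hc.1)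
  rintro (i | j)
  exacts [hx i, hy j]

theorem mem_span_constructionXRows (h1 : LinearIndependent K (Sum.elim G2 Gx))
    (h3 : LinearIndependent K G3) {c : α ⊕ β → E}
    (hc : c ∈ span K (range (constructionXRows Gx G3 G2))) :
    (∃ v ∈ span K (range G2), c = Sum.elim v 0) ∨
      ∃ u ∈ span K (range G2 ∪ range Gx), ∃ x ∈ span K (range G3),
        u ≠ 0 ∧ x ≠ 0 ∧ c = Sum.elim u x := by
  obtain ⟨c', rfl⟩ := (mem_span_range_iff_exists_fun K).mp hc
  rw [sum_smul_constructionXRows]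
  by_cases hx : ∀ i, c' (.inl i) = 0
  · refine .inl ⟨∑ j, c' (.inr j) • G2 j, (mem_span_range_iff_exists_fun K).mpr ⟨_, rfl⟩, ?_⟩
    simp [hx]
  · push Not at hx
    obtain ⟨i, hi⟩ := hx
    let b : κ ⊕ ι → K := Sum.elim (fun j => c' (.inr j)) (fun i => c' (.inl i))
    have hb : ∑ k, b k • Sum.elim G2 Gx k =
        ∑ i, c' (.inl i) • Gx i + ∑ j, c' (.inr j) • G2 j := by
      rw [Fintype.sum_sum_type, add_comm]
      rfl
    refine .inr ⟨_, ?_, _, (mem_span_range_iff_exists_fun K).mpr ⟨_, rfl⟩,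
      fun hu0 => hi ?_, fun hx0 => hi ?_, rfl⟩
    · rw [← Sum.elim_range]
      exact (mem_span_range_iff_exists_fun K).mpr ⟨b, hb⟩
    · exact Fintype.linearIndependent_iff.mp h1 b (hb.trans hu0) (.inr i)
    · exact Fintype.linearIndependent_iff.mp h3 _ hx0 i

theorem le_hammingNorm_of_mem_span_constructionXRows [DecidableEq E] [Fintype α] [Fintype β]
    {d1 d2 δ : ℕ}
    (h1 : LinearIndependent K (Sum.elim G2 Gx)) (h3 : LinearIndependent K G3)
    (hd1 : ∀ c ∈ span K (range G2 ∪ range Gx), c ≠ 0 → d1 ≤ hammingNorm c)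
    (hd2 : ∀ c ∈ span K (range G2), c ≠ 0 → d2 ≤ hammingNorm c)
    (hδ : ∀ c ∈ span K (range G3), c ≠ 0 → δ ≤ hammingNorm c)
    {c : α ⊕ β → E} (hc : c ∈ span K (range (constructionXRows Gx G3 G2))) (hc0 : c ≠ 0) :
    min (δ + d1) d2 ≤ hammingNorm c := by
  rcases mem_span_constructionXRows h1 h3 hc with ⟨v, hv, rfl⟩ | ⟨u, hu, x, hx, hu0, hx0, rfl⟩
  · have hv0 : v ≠ 0 := by
      rintro rfl
      exact hc0 Sum.elim_zero_zero
    calc min (δ + d1) d2 ≤ d2 := min_le_right _ _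
      _ ≤ hammingNorm v := hd2 v hv hv0
      _ ≤ hammingNorm (Sum.elim v (0 : β → E)) := by simp [hammingNorm_sum_elim]
  · calc min (δ + d1) d2 ≤ δ + d1 := min_le_left _ _
      _ ≤ hammingNorm x + hammingNorm u := add_le_add (hδ x hx hx0) (hd1 u hu hu0)
      _ = hammingNorm (Sum.elim u x) := by rw [hammingNorm_sum_elim, add_comm]

end ConstructionX

theorem additive_construction_X_general {K E : Type*} [Field K] [AddCommGroup E] [Module K E]
    [DecidableEq E] {n l r2 rx d1 d2 δ : ℕ}
    (G2 : Fin r2 → Fin n → E) (Gx : Fin rx → Fin n → E) (G3 : Fin rx → Fin l → E)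
    (h1 : LinearIndependent K (Sum.elim G2 Gx))
    (h3 : LinearIndependent K G3)
    (hd1 : ∀ c ∈ Submodule.span K (Set.range G2 ∪ Set.range Gx), c ≠ 0 → d1 ≤ hammingNorm c)
    (hd2 : ∀ c ∈ Submodule.span K (Set.range G2), c ≠ 0 → d2 ≤ hammingNorm c)
    (hδ : ∀ c ∈ Submodule.span K (Set.range G3), c ≠ 0 → δ ≤ hammingNorm c) :
    LinearIndependent K
      (Sum.elim (fun i => Sum.elim (Gx i) (G3 i)) (fun i => Sum.elim (G2 i) (0 : Fin l → E)) :
        Fin rx ⊕ Fin r2 → (Fin n ⊕ Fin l → E)) ∧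
    ∀ c ∈ Submodule.span K (Set.range
        (Sum.elim (fun i => Sum.elim (Gx i) (G3 i)) (fun i => Sum.elim (G2 i) (0 : Fin l → E)) :
          Fin rx ⊕ Fin r2 → (Fin n ⊕ Fin l → E))),
      c ≠ 0 → min (δ + d1) d2 ≤ hammingNorm c :=
  ⟨linearIndependent_constructionXRows (h1.comp Sum.inl Sum.inl_injective) h3,
    fun _ hc hc0 => le_hammingNorm_of_mem_span_constructionXRows h1 h3 hd1 hd2 hδ hc hc0⟩

/-- Lemma 7 (Additive Construction X): with C₂ ⊂ C₁ additive codes of length n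
(C₁ generated by the rows of G₂ stacked with G_x, C₂ by the rows of G₂), with
minimum distances d₁ < d₂, and an auxiliary additive code C₃ of length l and
minimum distance δ generated by G₃ (whose number of rows is the codimension of
C₂ in C₁), the code generated by the rows of [[G_x, G₃], [G₂, 0]] has the same
F_q-dimension as C₁ and minimum Hamming distance at least min(δ + d₁, d₂). -/
theorem additive_construction_X {K E : Type*} [Field K] [AddCommGroup E] [Module K E]
    [DecidableEq E] {n l r2 rx d1 d2 δ : ℕ} (hrx : 0 < rx)
    (G2 : Fin r2 → Fin n → E) (Gx : Fin rx → Fin n → E) (G3 : Fin rx → Fin l → E)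
    (h1 : LinearIndependent K (Sum.elim G2 Gx))
    (h3 : LinearIndependent K G3)
    (hd1 : ∀ c ∈ Submodule.span K (Set.range G2 ∪ Set.range Gx), c ≠ 0 → d1 ≤ hammingNorm c)
    (hd2 : ∀ c ∈ Submodule.span K (Set.range G2), c ≠ 0 → d2 ≤ hammingNorm c)
    (hδ : ∀ c ∈ Submodule.span K (Set.range G3), c ≠ 0 → δ ≤ hammingNorm c)
    (hlt : d1 < d2) :
    LinearIndependent K
      (Sum.elim (fun i => Sum.elim (Gx i) (G3 i)) (fun i => Sum.elim (G2 i) (0 : Fin l → E)) :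
        Fin rx ⊕ Fin r2 → (Fin n ⊕ Fin l → E)) ∧
    ∀ c ∈ Submodule.span K (Set.range
        (Sum.elim (fun i => Sum.elim (Gx i) (G3 i)) (fun i => Sum.elim (G2 i) (0 : Fin l → E)) :
          Fin rx ⊕ Fin r2 → (Fin n ⊕ Fin l → E))),
      c ≠ 0 → min (δ + d1) d2 ≤ hammingNorm c :=
  additive_construction_X_general G2 Gx G3 h1 h3 hd1 hd2 hδ
end

section
/- For binary vectors, the symplectic inner product equals the trace Hermitian inner product under the map Φ: for u, v in F_2^{2n}, ⟨u, v⟩_s = Σ_{i=0}^{n−1}(u_i v_{n+i} − u_{n+i} v_i) equals the trace (from F_4 to F_2) Hermitian inner product Tr(Σ_{i=0}^{n−1} Φ(u)_i · Φ(v)_i^2) of Φ(u) and Φ(v) in F_4^n. -/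
/-!
Write `Tr z = z + z ^ 2`. In characteristic 2 squaring is additive, so `Tr` is additive and the
claim reduces to one coordinate. There, since conjugation `z ↦ z ^ 2` fixes `F₂` and sends `w`
to `w + 1`, the product `(a + w b) (c + w d) ^ 2` equals `p + w q` with `p, q ∈ F₂` and
`q = a d + b c`; finally `Tr p = 2 p = 0` and `Tr (w q) = (w + w ^ 2) q = q`.
-/

section CharTwo

variable {R : Type*} [CommRing R] [CharP R 2]

theorem CharTwo.sum_add_sum_sq {ι : Type*} (s : Finset ι) (f : ι → R) :
    (∑ i ∈ s, f i) + (∑ i ∈ s, f i) ^ 2 = ∑ i ∈ s, (f i + f i ^ 2) := by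
  rw [CharTwo.sum_sq, ← Finset.sum_add_distrib]

variable {w : R}

theorem CharTwo.add_mul_add_mul_sq (hw : w ^ 2 = w + 1) (a b : R) {c d : R} (hc : c ^ 2 = c)
    (hd : d ^ 2 = d) :
    (a + w * b) * (c + w * d) ^ 2 = (a * c + a * d + b * d) + w * (a * d + b * c) := by
  rw [CharTwo.add_sq, mul_pow, hw, hc, hd]
  linear_combination b * d * hw + b * d * w * CharTwo.two_eq_zero (R := R)

theorem CharTwo.add_mul_add_sq (hw : w ^ 2 = w + 1) {p q : R} (hp : p ^ 2 = p) (hq : q ^ 2 = q) :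
    (p + w * q) + (p + w * q) ^ 2 = q := by
  rw [CharTwo.add_sq, mul_pow, hw, hp, hq]
  linear_combination (p + w * q) * CharTwo.two_eq_zero (R := R)

end CharTwo

section ZModTwoAlgebra

variable {R : Type*} [CommRing R] [Algebra (ZMod 2) R]

theorem algebraMap_zmod_two_sq (x : ZMod 2) :
    algebraMap (ZMod 2) R x ^ 2 = algebraMap (ZMod 2) R x := by
  rw [← map_pow, ZMod.pow_card]

theorem trace_mul_conj_eq [CharP R 2] {w : R} (hw : w ^ 2 = w + 1) (a b c d : ZMod 2) :
    let φ := algebraMap (ZMod 2) R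
    let x := (φ a + w * φ b) * (φ c + w * φ d) ^ 2
    x + x ^ 2 = φ (a * d - b * c) := by
  intro φ x
  have hx : x = φ (a * c + a * d + b * d) + w * φ (a * d + b * c) := by
    simp only [x, map_add, map_mul]
    exact CharTwo.add_mul_add_mul_sq hw _ _ (algebraMap_zmod_two_sq c) (algebraMap_zmod_two_sq d)
  rw [hx, CharTwo.add_mul_add_sq hw (algebraMap_zmod_two_sq _) (algebraMap_zmod_two_sq _),
    CharTwo.sub_eq_add]

end ZModTwoAlgebra

/-- For binary vectors u, v ∈ F_2^{2n}, the symplectic inner product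
∑ (u_i v_{n+i} − u_{n+i} v_i) equals the trace Hermitian inner product
Tr(∑ Φ(u)_i Φ(v)_i²) of Φ(u), Φ(v) ∈ F_4^n, where Φ(x|y) = x + w y,
w² = w + 1, and Tr(z) = z + z². -/
theorem symplectic_eq_trace_hermitian {F : Type*} [Field F] [Algebra (ZMod 2) F]
    {n : ℕ} (w : F) (hw : w ^ 2 = w + 1)
    (u v : Fin (n + n) → ZMod 2) (S : F)
    (hS : S = ∑ i : Fin n,
      (algebraMap (ZMod 2) F (u (Fin.castAdd n i)) + w * algebraMap (ZMod 2) F (u (Fin.natAdd n i))) *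
      (algebraMap (ZMod 2) F (v (Fin.castAdd n i)) + w * algebraMap (ZMod 2) F (v (Fin.natAdd n i))) ^ 2) :
    algebraMap (ZMod 2) F
        (∑ i : Fin n,
          (u (Fin.castAdd n i) * v (Fin.natAdd n i) - u (Fin.natAdd n i) * v (Fin.castAdd n i)))
      = S + S ^ 2 := by
  have : CharP F 2 := charP_of_injective_algebraMap (algebraMap (ZMod 2) F).injective 2
  rw [hS, CharTwo.sum_add_sum_sq, map_sum]
  exact Finset.sum_congr rfl fun i _ => (trace_mul_conj_eq hw _ _ _ _).symm
end

section
/- Let C1 be an additive complementary dual (ACD) code over F_{q^2} of length n1 and F_q-dimension 2k (with respect to the trace-symplectic duality via Φ^{-1}), and let C2 be an additive trace Hermitian self-orthogonal code over F_{q^2} of length n2 and F_q-dimension 2k. Write Φ^{-1}(G_{a1}) = (A | B) and Φ^{-1}(G_{a2}) = (C | D) for their generator matrices. Then the matrix (A then B)·J·(A then B)^T = AB^T − BA^T has rank 2k, CD^T − DC^T = 0, and consequently the code generated by Φ((A, C, B, D)) is an ACD code of length n1 + n2, F_q-dimension 2k, and minimum distance at least d1 + d2, where d1, d2 are the minimum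 distances of C1 and C2. -/
/-!
The symplectic form and the symplectic weight on the juxtaposed space split as the sums of those
of the two blocks, and the two blocks of the code generated by `(A, C, B, D)` are the codes `C₁`
and `C₂`, each isomorphic to it since the rows of `(A | B)` and of `(C | D)` are independent.
A codeword orthogonal to the whole juxtaposed code therefore has its `C₁`-block orthogonal to
`C₁` (the `C₂`-contribution vanishes by self-orthogonality), so it is zero; a nonzero codeword has
nonzero blocks in both codes, so its weight is at least `d₁ + d₂`. Finally `ABᵀ - BAᵀ` is the Gram
matrix of the rows of `(A | B)`, and a vector in its left kernel yields a codeword of `C₁`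
orthogonal to `C₁`.
-/

open Finset

/-- Symplectic inner product on F_q^{2N} (coordinates indexed by ι ⊕ ι). -/
def sympInner {K : Type*} [Field K] {ι : Type*} [Fintype ι] (u v : ι ⊕ ι → K) : K :=
  ∑ i : ι, (u (Sum.inl i) * v (Sum.inr i) - u (Sum.inr i) * v (Sum.inl i))

/-- Symplectic weight on F_q^{2N}. -/
def sympWt {K : Type*} [Field K] [DecidableEq K] {ι : Type*} [Fintype ι] [DecidableEq ι]
    (u : ι ⊕ ι → K) : ℕ :=
  (univ.filter fun i : ι => u (Sum.inl i) ≠ 0 ∨ u (Sum.inr i) ≠ 0).card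

section Gram

open Matrix

variable {K V ι : Type*} [Field K] [AddCommGroup V] [Module K V] [Fintype ι]

theorem dotProduct_gram_mulVec (B : V →ₗ[K] V →ₗ[K] K) (r : ι → V) (v w : ι → K) :
    v ⬝ᵥ (of fun i j => B (r i) (r j)) *ᵥ w = B (∑ i, v i • r i) (∑ j, w j • r j) := by
  simp only [dotProduct, mulVec, of_apply, map_sum, map_smul, LinearMap.sum_apply,
    LinearMap.smul_apply, smul_eq_mul, mul_sum]
  rw [sum_comm]
  exact sum_congr rfl fun _ _ => sum_congr rfl fun _ _ => by ring

theorem isUnit_gram_of_separating_on_span [DecidableEq ι] {B : V →ₗ[K] V →ₗ[K] K} {r : ι → V}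
    (hr : LinearIndependent K r)
    (hB : ∀ c ∈ Submodule.span K (Set.range r),
      (∀ c' ∈ Submodule.span K (Set.range r), B c c' = 0) → c = 0) :
    IsUnit (of fun i j => B (r i) (r j)) := by
  rw [isUnit_iff_isUnit_det, isUnit_iff_ne_zero, ← separatingLeft_iff_det_ne_zero,
    separatingLeft_def]
  intro v hv
  have hc : ∑ i, v i • r i = 0 := by
    refine hB _ (Submodule.sum_mem _ fun i _ =>
      Submodule.smul_mem _ _ (Submodule.subset_span ⟨i, rfl⟩)) fun c' hc' => ?_
    obtain ⟨w, rfl⟩ := (Submodule.mem_span_range_iff_exists_fun K).mp hc'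
    rw [← dotProduct_gram_mulVec, hv]
  exact funext (Fintype.linearIndependent_iff.mp hr v hc)

end Gram

section Symplectic

variable {K : Type*} [Field K]

def sympForm (ι : Type*) [Fintype ι] : (ι ⊕ ι → K) →ₗ[K] (ι ⊕ ι → K) →ₗ[K] K :=
  LinearMap.mk₂ K sympInner
    (fun _ _ _ => by
      simp only [sympInner, Pi.add_apply, ← sum_add_distrib]
      exact sum_congr rfl fun _ _ => by ring)
    (fun _ _ _ => by
      simp only [sympInner, Pi.smul_apply, smul_eq_mul, mul_sum]
      exact sum_congr rfl fun _ _ => by ring)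
    (fun _ _ _ => by
      simp only [sympInner, Pi.add_apply, ← sum_add_distrib]
      exact sum_congr rfl fun _ _ => by ring)
    (fun _ _ _ => by
      simp only [sympInner, Pi.smul_apply, smul_eq_mul, mul_sum]
      exact sum_congr rfl fun _ _ => by ring)

variable {ι : Type*} [Fintype ι]

def IsSymplecticLCD (W : Submodule K (ι ⊕ ι → K)) : Prop :=
  ∀ c ∈ W, (∀ c' ∈ W, sympInner c c' = 0) → c = 0

def IsSymplecticSelfOrthogonal (W : Submodule K (ι ⊕ ι → K)) : Prop :=
  ∀ c ∈ W, ∀ c' ∈ W, sympInner c c' = 0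

def SympDistAtLeast [DecidableEq K] [DecidableEq ι] (W : Submodule K (ι ⊕ ι → K)) (d : ℕ) :
    Prop :=
  ∀ c ∈ W, c ≠ 0 → d ≤ sympWt c

end Symplectic

section SymplecticGram

open Matrix

variable {K ι κ : Type*} [Field K] [Fintype ι] (A B : Matrix κ ι K)

theorem gram_sympInner_sumElim :
    (of fun i j => sympInner (Sum.elim (A i) (B i)) (Sum.elim (A j) (B j))) = A * Bᵀ - B * Aᵀ := by
  ext i j
  simp [sympInner, mul_apply, sum_sub_distrib]

theorem isUnit_mul_transpose_sub_of_isSymplecticLCD [Fintype κ] [DecidableEq κ]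
    (hind : LinearIndependent K fun i => Sum.elim (A i) (B i))
    (hLCD : IsSymplecticLCD (Submodule.span K (Set.range fun i => Sum.elim (A i) (B i)))) :
    IsUnit (A * Bᵀ - B * Aᵀ) := by
  rw [← gram_sympInner_sumElim]
  exact isUnit_gram_of_separating_on_span (B := sympForm ι) hind fun c hc => hLCD c hc

theorem mul_transpose_sub_eq_zero_of_isSymplecticSelfOrthogonal
    (hSO : IsSymplecticSelfOrthogonal
      (Submodule.span K (Set.range fun i => Sum.elim (A i) (B i)))) :
    A * Bᵀ - B * Aᵀ = 0 := by
  rw [← gram_sympInner_sumElim]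
  ext i j
  exact hSO _ (Submodule.subset_span ⟨i, rfl⟩) _ (Submodule.subset_span ⟨j, rfl⟩)

end SymplecticGram

section SpanComp

variable {R M N ι : Type*} [Semiring R] [AddCommMonoid M] [AddCommMonoid N] [Module R M]
  [Module R N] (f : M →ₗ[R] N) {v : ι → M} {c : M}

theorem map_mem_span_range_comp (hc : c ∈ Submodule.span R (Set.range v)) :
    f c ∈ Submodule.span R (Set.range (f ∘ v)) := by
  rw [Set.range_comp]
  exact Submodule.apply_mem_span_image_of_mem_span f hc

theorem exists_mem_span_of_mem_span_range_comp {x : N}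
    (hx : x ∈ Submodule.span R (Set.range (f ∘ v))) :
    ∃ c ∈ Submodule.span R (Set.range v), f c = x := by
  rwa [Set.range_comp, ← Submodule.map_span, Submodule.mem_map] at hx

theorem eq_zero_of_mem_span_of_map_eq_zero (hv : LinearIndependent R (f ∘ v))
    (hc : c ∈ Submodule.span R (Set.range v)) (h : f c = 0) : c = 0 :=
  Submodule.disjoint_def.mp (Submodule.range_ker_disjoint hv) c hc h

end SpanComp

section Blocks

variable (K : Type*) [Field K] (α β : Type*)

def leftBlock : ((α ⊕ β) ⊕ (α ⊕ β) → K) →ₗ[K] (α ⊕ α → K) :=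
  LinearMap.funLeft K K (Sum.map Sum.inl Sum.inl)

def rightBlock : ((α ⊕ β) ⊕ (α ⊕ β) → K) →ₗ[K] (β ⊕ β → K) :=
  LinearMap.funLeft K K (Sum.map Sum.inr Sum.inr)

variable {K α β}

theorem leftBlock_sumElim (a b : α → K) (c d : β → K) :
    leftBlock K α β (Sum.elim (Sum.elim a c) (Sum.elim b d)) = Sum.elim a b := by
  ext (i | i) <;> rfl

theorem rightBlock_sumElim (a b : α → K) (c d : β → K) :
    rightBlock K α β (Sum.elim (Sum.elim a c) (Sum.elim b d)) = Sum.elim c d := by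
  ext (i | i) <;> rfl

variable [Fintype α] [Fintype β]

theorem sympInner_eq_blocks (u v : (α ⊕ β) ⊕ (α ⊕ β) → K) :
    sympInner u v = sympInner (leftBlock K α β u) (leftBlock K α β v) +
      sympInner (rightBlock K α β u) (rightBlock K α β v) := by
  simp only [sympInner, leftBlock, rightBlock, LinearMap.funLeft_apply, Fintype.sum_sum_type,
    Sum.map_inl, Sum.map_inr]

theorem sympWt_eq_blocks [DecidableEq K] [DecidableEq α] [DecidableEq β]
    (u : (α ⊕ β) ⊕ (α ⊕ β) → K) :
    sympWt u = sympWt (leftBlock K α β u) + sympWt (rightBlock K α β u) := by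
  simp only [sympWt, card_filter]
  simp only [leftBlock, rightBlock, LinearMap.funLeft_apply, Fintype.sum_sum_type, Sum.map_inl,
    Sum.map_inr]
  -- the two sides differ only in their `Decidable` instances
  congr 1

end Blocks

section Juxtaposition

variable {K α β κ : Type*} [Field K] [Fintype α] [Fintype β]
  {g : κ → ((α ⊕ β) ⊕ (α ⊕ β) → K)} {r₁ : κ → (α ⊕ α → K)} {r₂ : κ → (β ⊕ β → K)}

theorem isSymplecticLCD_span_of_blocks (hg₁ : leftBlock K α β ∘ g = r₁)
    (hg₂ : rightBlock K α β ∘ g = r₂) (h₁ : LinearIndependent K r₁)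
    (hLCD : IsSymplecticLCD (Submodule.span K (Set.range r₁)))
    (hSO : IsSymplecticSelfOrthogonal (Submodule.span K (Set.range r₂))) :
    IsSymplecticLCD (Submodule.span K (Set.range g)) := by
  subst hg₁ hg₂
  intro c hc hperp
  refine eq_zero_of_mem_span_of_map_eq_zero _ h₁ hc
    (hLCD _ (map_mem_span_range_comp _ hc) fun x hx => ?_)
  obtain ⟨c', hc', rfl⟩ := exists_mem_span_of_mem_span_range_comp _ hx
  have hsplit := sympInner_eq_blocks c c'
  rwa [hperp c' hc', hSO _ (map_mem_span_range_comp _ hc) _ (map_mem_span_range_comp _ hc'),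
    add_zero, eq_comm] at hsplit

theorem sympDistAtLeast_span_of_blocks [DecidableEq K] [DecidableEq α] [DecidableEq β]
    {d₁ d₂ : ℕ} (hg₁ : leftBlock K α β ∘ g = r₁) (hg₂ : rightBlock K α β ∘ g = r₂)
    (h₁ : LinearIndependent K r₁) (h₂ : LinearIndependent K r₂)
    (hd₁ : SympDistAtLeast (Submodule.span K (Set.range r₁)) d₁)
    (hd₂ : SympDistAtLeast (Submodule.span K (Set.range r₂)) d₂) :
    SympDistAtLeast (Submodule.span K (Set.range g)) (d₁ + d₂) := by
  subst hg₁ hg₂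
  intro c hc hne
  rw [sympWt_eq_blocks]
  exact add_le_add
    (hd₁ _ (map_mem_span_range_comp _ hc) fun h =>
      hne (eq_zero_of_mem_span_of_map_eq_zero _ h₁ hc h))
    (hd₂ _ (map_mem_span_range_comp _ hc) fun h =>
      hne (eq_zero_of_mem_span_of_map_eq_zero _ h₂ hc h))

end Juxtaposition

/-- Lemma 10: let C₁ (generated by the full-rank 2k-row matrix (A | B)) be a
symplectic LCD code (= ACD code via Φ) of minimum symplectic distance d₁, and
C₂ (generated by the full-rank 2k-row matrix (C | D)) a symplectic
self-orthogonal code of minimum symplectic distance d₂. Then A·Bᵀ − B·Aᵀ is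
nonsingular (rank 2k), C·Dᵀ − D·Cᵀ = 0, and the juxtaposed code generated by
the rows of (A, C, B, D) is symplectic LCD of the same dimension 2k with
minimum symplectic distance at least d₁ + d₂. -/
theorem acd_juxtaposition {K : Type*} [Field K] [DecidableEq K] {k n1 n2 d1 d2 : ℕ}
    (A B : Matrix (Fin (2 * k)) (Fin n1) K) (Cm D : Matrix (Fin (2 * k)) (Fin n2) K)
    (hfull1 : LinearIndependent K (fun i : Fin (2 * k) => Sum.elim (A i) (B i)))
    (hfull2 : LinearIndependent K (fun i : Fin (2 * k) => Sum.elim (Cm i) (D i)))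
    (hLCD : ∀ c ∈ Submodule.span K (Set.range fun i : Fin (2 * k) => Sum.elim (A i) (B i)),
      (∀ c' ∈ Submodule.span K (Set.range fun i : Fin (2 * k) => Sum.elim (A i) (B i)),
        sympInner c c' = 0) → c = 0)
    (hSO : ∀ c ∈ Submodule.span K (Set.range fun i : Fin (2 * k) => Sum.elim (Cm i) (D i)),
      ∀ c' ∈ Submodule.span K (Set.range fun i : Fin (2 * k) => Sum.elim (Cm i) (D i)),
        sympInner c c' = 0)
    (hd1 : ∀ c ∈ Submodule.span K (Set.range fun i : Fin (2 * k) => Sum.elim (A i) (B i)),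
      c ≠ 0 → d1 ≤ sympWt c)
    (hd2 : ∀ c ∈ Submodule.span K (Set.range fun i : Fin (2 * k) => Sum.elim (Cm i) (D i)),
      c ≠ 0 → d2 ≤ sympWt c) :
    IsUnit (A * B.transpose - B * A.transpose) ∧
    Cm * D.transpose - D * Cm.transpose = 0 ∧
    (∀ c ∈ Submodule.span K (Set.range fun i : Fin (2 * k) =>
        (Sum.elim (Sum.elim (A i) (Cm i)) (Sum.elim (B i) (D i)) :
          (Fin n1 ⊕ Fin n2) ⊕ (Fin n1 ⊕ Fin n2) → K)),
      (∀ c' ∈ Submodule.span K (Set.range fun i : Fin (2 * k) =>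
          (Sum.elim (Sum.elim (A i) (Cm i)) (Sum.elim (B i) (D i)) :
            (Fin n1 ⊕ Fin n2) ⊕ (Fin n1 ⊕ Fin n2) → K)),
        sympInner c c' = 0) → c = 0) ∧
    Module.finrank K (Submodule.span K (Set.range fun i : Fin (2 * k) =>
        (Sum.elim (Sum.elim (A i) (Cm i)) (Sum.elim (B i) (D i)) :
          (Fin n1 ⊕ Fin n2) ⊕ (Fin n1 ⊕ Fin n2) → K))) = 2 * k ∧
    ∀ c ∈ Submodule.span K (Set.range fun i : Fin (2 * k) =>
        (Sum.elim (Sum.elim (A i) (Cm i)) (Sum.elim (B i) (D i)) :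
          (Fin n1 ⊕ Fin n2) ⊕ (Fin n1 ⊕ Fin n2) → K)),
      c ≠ 0 → d1 + d2 ≤ sympWt c := by
  have hg₁ : leftBlock K (Fin n1) (Fin n2) ∘
      (fun i => Sum.elim (Sum.elim (A i) (Cm i)) (Sum.elim (B i) (D i))) =
      fun i => Sum.elim (A i) (B i) :=
    funext fun i => leftBlock_sumElim _ _ _ _
  have hg₂ : rightBlock K (Fin n1) (Fin n2) ∘
      (fun i => Sum.elim (Sum.elim (A i) (Cm i)) (Sum.elim (B i) (D i))) =
      fun i => Sum.elim (Cm i) (D i) :=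
    funext fun i => rightBlock_sumElim _ _ _ _
  refine ⟨isUnit_mul_transpose_sub_of_isSymplecticLCD A B hfull1 hLCD,
    mul_transpose_sub_eq_zero_of_isSymplecticSelfOrthogonal Cm D hSO,
    isSymplecticLCD_span_of_blocks hg₁ hg₂ hfull1 hLCD hSO, ?_,
    sympDistAtLeast_span_of_blocks hg₁ hg₂ hfull1 hfull2 hd1 hd2⟩
  rw [finrank_span_eq_card (LinearIndependent.of_comp _ (hg₁ ▸ hfull1)), Fintype.card_fin]
end

section
/- Let G be a 2k × 2N matrix over F_q generating a code C ⊆ F_q^{2N}, and let J = [[0, I_N], [−I_N, 0]]. Then C is a symplectic LCD code (C ∩ C^{⊥s} = {0}) if and only if the 2k × 2k matrix G·J·G^T is nonsingular. -/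
/-!
Write codewords as `x ᵥ* G`. Then `⟨x ᵥ* G, y ᵥ* G⟩_s = (x ᵥ* (G J Gᵀ)) ⬝ᵥ y`, so the codeword
`x ᵥ* G` is symplectically orthogonal to the whole code iff `x` lies in the left kernel of
`G J Gᵀ`; since the rows of `G` are independent, `x ᵥ* G = 0` only for `x = 0`.
-/

open Finset

open Matrix Submodule

theorem sympInner_eq_dotProduct_mulVec {K : Type*} [Field K] {ι : Type*} [Fintype ι]
    [DecidableEq ι] (u v : ι ⊕ ι → K) :
    sympInner u v = u ⬝ᵥ (fromBlocks 0 1 (-1) 0 *ᵥ v) := by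
  simp [sympInner, dotProduct, Fintype.sum_sum_type, mulVec, fromBlocks, one_apply,
    mul_comm, sub_eq_add_neg, Finset.sum_add_distrib]

namespace Matrix

variable {K m n : Type*} [Fintype m] [Fintype n]

theorem vecMul_dotProduct_mulVec_vecMul [CommSemiring K] (G : Matrix m n K) (A : Matrix n n K)
    (x y : m → K) :
    (x ᵥ* G) ⬝ᵥ (A *ᵥ (y ᵥ* G)) = (x ᵥ* (G * A * Gᵀ)) ⬝ᵥ y := by
  rw [← mulVec_transpose G y, mulVec_mulVec, dotProduct_mulVec, vecMul_vecMul, ← Matrix.mul_assoc]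

theorem isUnit_mul_mul_transpose_iff [Field K] [DecidableEq m] {G : Matrix m n K}
    (A : Matrix n n K) (hG : LinearIndependent K G.row) :
    IsUnit (G * A * Gᵀ) ↔
      ∀ c ∈ span K (Set.range G.row), (∀ c' ∈ span K (Set.range G.row), c ⬝ᵥ (A *ᵥ c') = 0) →
        c = 0 := by
  have hinj : Function.Injective G.vecMul := vecMul_injective_iff.mpr hG
  rw [← vecMul_injective_iff_isUnit, ← coe_vecMulLinear, injective_iff_map_eq_zero,
    ← range_vecMulLinear]
  simp only [LinearMap.mem_range, forall_exists_index, forall_apply_eq_imp_iff,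
    vecMulLinear_apply, vecMul_dotProduct_mulVec_vecMul, dotProduct_eq_zero_iff,
    hinj.eq_iff' (zero_vecMul G)]

end Matrix

/-- A code generated by a full-row-rank 2k × 2N matrix G is symplectic LCD
(C ∩ C^{⊥s} = {0}) iff G·J·Gᵀ is nonsingular, where J = [[0, I_N], [−I_N, 0]]. -/
theorem symplectic_LCD_iff_gram_unit {K : Type*} [Field K] {k N : ℕ}
    (G : Matrix (Fin (2 * k)) (Fin N ⊕ Fin N) K)
    (hfull : LinearIndependent K (fun i : Fin (2 * k) => G i)) :
    (∀ c ∈ Submodule.span K (Set.range fun i : Fin (2 * k) => G i),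
        (∀ c' ∈ Submodule.span K (Set.range fun i : Fin (2 * k) => G i),
          sympInner c c' = 0) → c = 0)
      ↔ IsUnit (G * (Matrix.fromBlocks 0 1 (-1) 0 : Matrix (Fin N ⊕ Fin N) (Fin N ⊕ Fin N) K) * G.transpose) := by
  simp_rw [sympInner_eq_dotProduct_mulVec]
  exact (isUnit_mul_mul_transpose_iff _ hfull).symm
end

section
/- There is no quaternary additive (31, 2.5, d)_4 code with d ≥ 25; equivalently, any additive subgroup of F_4^{31} of size 2^5 has minimum Hamming distance at most 24. (Thus the (31, 2.5, 24)_4 code constructed in the paper is optimal.) -/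
/-!
Plotkin's averaging argument. For each coordinate `i`, the codewords vanishing at `i` form
the kernel of an additive map into `F`, hence a subgroup of index at most `4`; so at most
`24` of the `32` codewords are nonzero at `i`, and the total weight of the code is at most
`31 * 24`. If every nonzero codeword had weight at least `25`, the total weight would be at
least `31 * 25`.
-/

open Finset

theorem AddMonoidHom.card_le_card_mul_card_ker {G H : Type*} [AddGroup G] [AddGroup H] [Finite H]
    (f : G →+ H) : Nat.card G ≤ Nat.card H * Nat.card f.ker := by
  rw [← f.ker.card_mul_index, AddSubgroup.index_ker, mul_comm]
  exact Nat.mul_le_mul_right _ (AddSubgroup.card_le_card_addGroup _)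

theorem sum_hammingNorm_eq_sum_card_filter {α ι : Type*} [Fintype ι] {β : ι → Type*}
    [∀ i, Zero (β i)] [∀ i, DecidableEq (β i)] (s : Finset α) (f : α → ∀ i, β i) :
    ∑ a ∈ s, hammingNorm (f a) = ∑ i, #{a ∈ s | f a i ≠ 0} := by
  simp only [hammingNorm, card_filter]
  exact Finset.sum_comm

section Plotkin

variable {G ι β : Type*} [AddGroup G] [Fintype G] [AddGroup β] [Fintype β] [DecidableEq β]

theorem AddMonoidHom.card_mul_card_apply_ne_zero_le (φ : G →+ ι → β) (i : ι) :
    Fintype.card β * #{g | φ g i ≠ 0} ≤ (Fintype.card β - 1) * Fintype.card G := by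
  let φᵢ := (Pi.evalAddMonoidHom (fun _ => β) i).comp φ
  have hzero : Nat.card φᵢ.ker = #{g | φ g i = 0} := by
    rw [← Fintype.card_subtype, ← Nat.card_eq_fintype_card]
    rfl
  have hker := φᵢ.card_le_card_mul_card_ker
  rw [hzero, Nat.card_eq_fintype_card, Nat.card_eq_fintype_card] at hker
  have hsplit := card_filter_add_card_filter_not (s := univ) (fun g => φ g i ≠ 0)
  simp only [not_not, card_univ] at hsplit
  rw [Nat.sub_mul, one_mul, ← hsplit, mul_add]
  omega

theorem AddMonoidHom.plotkin_bound [Fintype ι] (φ : G →+ ι → β) {d : ℕ}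
    (hd : ∀ g ≠ 0, d ≤ hammingNorm (φ g)) :
    (Fintype.card G - 1) * d * Fintype.card β
      ≤ Fintype.card ι * (Fintype.card β - 1) * Fintype.card G := by
  classical
  have hlow : (Fintype.card G - 1) * d ≤ ∑ g, hammingNorm (φ g) := by
    calc (Fintype.card G - 1) * d = #{g : G | g ≠ 0} • d := by
          rw [filter_ne', card_erase_of_mem (mem_univ _), card_univ, smul_eq_mul]
      _ ≤ ∑ g ∈ {g : G | g ≠ 0}, hammingNorm (φ g) :=
          card_nsmul_le_sum _ _ _ fun g hg => hd g (mem_filter.mp hg).2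
      _ ≤ ∑ g, hammingNorm (φ g) := sum_le_sum_of_subset (filter_subset _ _)
  calc (Fintype.card G - 1) * d * Fintype.card β
      ≤ Fintype.card β * ∑ g, hammingNorm (φ g) := by
        rw [mul_comm]; exact Nat.mul_le_mul_left _ hlow
    _ = ∑ i, Fintype.card β * #{g | φ g i ≠ 0} := by
        rw [sum_hammingNorm_eq_sum_card_filter, mul_sum]
    _ ≤ ∑ _i : ι, (Fintype.card β - 1) * Fintype.card G :=
        sum_le_sum fun i _ => φ.card_mul_card_apply_ne_zero_le i
    _ = Fintype.card ι * (Fintype.card β - 1) * Fintype.card G := by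
        rw [sum_const, card_univ, smul_eq_mul, mul_assoc]

end Plotkin

/-- There is no quaternary additive (31, 2.5, ≥ 25)_4 code: every F_2-subspace of
F_4^31 of size 2^5 contains a nonzero codeword of Hamming weight at most 24. -/
theorem no_additive_31_2half_25 {F : Type*} [Field F] [Fintype F] [DecidableEq F]
    [Algebra (ZMod 2) F] (hF : Fintype.card F = 4)
    (C : Submodule (ZMod 2) (Fin 31 → F)) (hcard : Nat.card C = 2 ^ 5) :
    ∃ c ∈ C, c ≠ 0 ∧ hammingNorm c ≤ 24 := by
  by_contra! hC
  have : Fintype C := Fintype.ofFinite C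
  have hplotkin := C.subtype.toAddMonoidHom.plotkin_bound (d := 25) fun c hc =>
    hC c c.2 (by simpa using hc)
  rw [Nat.card_eq_fintype_card] at hcard
  rw [hcard, hF, Fintype.card_fin] at hplotkin
  norm_num at hplotkin
end
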